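/- Let S be a shift-invariant subspace of L²(ℝ) and n a positive integer with sets B_k = ⋃_{j∈ℤ}([k,k+1)+nj). If there exists k ∈ {0,…,n−1} such that supp(f̂) ⊆ B_k for all f ∈ S, then S is (1/n)ℤ-invariant. -/

import Mathlib

open MeasureTheory FourierTransform

noncomputable section

/-- The space `L²(ℝ)` of complex-valued square-integrable functions. -/
abbrev L2 := Lp ℂ 2 (volume : Measure ℝ)

/-- The translation operator `T_a f (x) = f (x - a)` on `L²(ℝ)`. -/
def Tr (a : ℝ) : L2 → L2 :=
  Lp.compMeasurePreserving (fun x => x - a) (measurePreserving_sub_right volume a)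

/-- `F` is the Fourier–Plancherel transform on `L²(ℝ)`: a unitary that agrees with the
classical Fourier integral `f̂(ω) = ∫ f(x) e^{-2πiωx} dx` on integrable functions. -/
def IsFourierTransform (F : L2 ≃ₗᵢ[ℂ] L2) : Prop :=
  ∀ f : L2, Integrable (f : ℝ → ℂ) volume → (F f : ℝ → ℂ) =ᵐ[volume] 𝓕 (f : ℝ → ℂ)

/-- The shift-invariant space generated by `f`: the closed span of integer translates. -/
def SIS (f : L2) : Set L2 :=
  closure (Submodule.span ℂ {g : L2 | ∃ j : ℤ, g = Tr (j : ℝ) f} : Set L2)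

/-- `B_k = ⋃_{j ∈ ℤ} ([k, k+1) + n j)`. -/
def Bset (n k : ℕ) : Set ℝ := {ω : ℝ | ∃ j : ℤ, ω - n * j ∈ Set.Ico (k : ℝ) ((k : ℝ) + 1)}

/-- `U_k = {f ∈ L² : f̂ = ĝ · χ_{B_k} for some g ∈ S}`. -/
def Uspace (F : L2 ≃ₗᵢ[ℂ] L2) (S : Set L2) (n k : ℕ) : Set L2 :=
  {f : L2 | ∃ g ∈ S, (F f : ℝ → ℂ) =ᵐ[volume] (Bset n k).indicator (F g : ℝ → ℂ)}

/-!
Under the Fourier transform, translation by `a` becomes multiplication by `𝐞 (-(a ω))`. So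
`F(S)` is a closed subspace invariant under multiplication by the characters `𝐞 (m ω)`, `m ∈ ℤ`;
by density of trigonometric polynomials in `C(ℝ/ℤ)` it is invariant under multiplication by every
continuous `1`-periodic function, and by dominated convergence under multiplication by every
uniformly bounded pointwise limit of such functions. On `B_k` the character `𝐞 (-(j/n) ω)` agrees
with the `1`-periodic function `𝐞 (-(j/n) (k + fract ω))`, which is such a limit; since `f̂`
vanishes off `B_k`, the transform of `T_{j/n} f` is this periodic multiple of `f̂`, so it lies
in `F(S)`.
-/

open Filter Topology BoundedContinuousFunction
open scoped ENNReal Real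

namespace MeasureTheory

namespace Lp

variable {α E : Type*} [MeasurableSpace α] {μ : Measure α} [NormedAddCommGroup E]
  {p : ℝ≥0∞}

theorem tendsto_of_dominated_of_ae_tendsto [Fact (1 ≤ p)] (hp : p ≠ ∞) {F : ℕ → Lp E p μ}
    {f : Lp E p μ} {g : α → ℝ} (hg : MemLp g p μ) (hbound : ∀ n, ∀ᵐ x ∂μ, ‖F n x‖ ≤ g x)
    (hlim : ∀ᵐ x ∂μ, Tendsto (fun n => F n x) atTop (𝓝 (f x))) :
    Tendsto F atTop (𝓝 f) := by
  have hp0 : p ≠ 0 := (zero_lt_one.trans_le Fact.out).ne'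
  have hpos : 0 < p.toReal := ENNReal.toReal_pos hp0 hp
  have hf : ∀ᵐ x ∂μ, ‖f x‖ ≤ g x := by
    filter_upwards [ae_all_iff.2 hbound, hlim] with x hx hx'
    exact le_of_tendsto' ((continuous_norm.tendsto _).comp hx') hx
  have hdiff (n : ℕ) :
      ∀ᵐ x ∂μ, ‖F n x - f x‖ₑ ^ p.toReal ≤ ‖2 * g x‖ₑ ^ p.toReal := by
    filter_upwards [hbound n, hf] with x hFx hfx
    refine ENNReal.rpow_le_rpow ?_ hpos.le
    rw [enorm_le_iff_norm_le, Real.norm_eq_abs]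
    linarith [norm_sub_le (F n x) (f x), le_abs_self (2 * g x)]
  have hint : ∫⁻ x, ‖2 * g x‖ₑ ^ p.toReal ∂μ ≠ ∞ :=
    (lintegral_rpow_enorm_lt_top_of_eLpNorm_lt_top hp0 hp (hg.const_mul 2).2).ne
  have hlint : Tendsto (fun n => ∫⁻ x, ‖F n x - f x‖ₑ ^ p.toReal ∂μ) atTop (𝓝 0) := by
    rw [← lintegral_zero]
    refine tendsto_lintegral_of_dominated_convergence' _ (fun n => ?_) hdiff hint ?_
    · exact ((Lp.aestronglyMeasurable (F n)).sub (Lp.aestronglyMeasurable f)).enorm.pow_const _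
    · filter_upwards [hlim] with x hx
      simpa [Function.comp_def, ENNReal.zero_rpow_of_pos hpos] using
        ((ENNReal.continuous_rpow_const (y := p.toReal)).tendsto _).comp
          ((continuous_enorm.tendsto _).comp (hx.sub_const (f x)))
  rw [tendsto_Lp_iff_tendsto_eLpNorm']
  simp_rw [eLpNorm_eq_lintegral_rpow_enorm_toReal hp0 hp]
  simpa [Function.comp_def, ENNReal.zero_rpow_of_pos (inv_pos.2 hpos)] using
    ((ENNReal.continuous_rpow_const (y := 1 / p.toReal)).tendsto 0).comp hlint

theorem simpleFunc.integrable (hp0 : p ≠ 0) (hp : p ≠ ∞) (f : Lp.simpleFunc E p μ) :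
    Integrable (f : α → E) μ :=
  ((SimpleFunc.memLp_iff_integrable hp0 hp).1
    ((Lp.memLp (f : Lp E p μ)).ae_eq (simpleFunc.toSimpleFunc_eq_toFun f).symm)).congr
    (simpleFunc.toSimpleFunc_eq_toFun f)

end Lp

end MeasureTheory

namespace BoundedContinuousFunction

variable {α E 𝕜 : Type*} [TopologicalSpace α] [MeasurableSpace α] [BorelSpace α]
  [NormedAddCommGroup E] [SecondCountableTopologyEither α E] [NormedField 𝕜] [NormedSpace 𝕜 E]

variable (𝕜) in
def toLinfty (μ : Measure α) : (α →ᵇ E) →L[𝕜] Lp E ∞ μ :=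
  LinearMap.mkContinuous
    { toFun f := f.memLp_top.toLp f
      map_add' f g := MemLp.toLp_add _ _
      map_smul' c f := MemLp.toLp_const_smul c _ }
    1 fun f => by
      simp only [LinearMap.coe_mk, AddHom.coe_mk, Lp.norm_toLp, one_mul]
      exact ENNReal.toReal_le_of_le_ofReal (norm_nonneg f) (by
        rw [eLpNorm_exponent_top]
        exact eLpNormEssSup_le_of_ae_bound (.of_forall f.norm_coe_le_norm))

theorem coeFn_toLinfty (μ : Measure α) (f : α →ᵇ E) : toLinfty 𝕜 μ f =ᵐ[μ] f :=
  MemLp.coeFn_toLp f.memLp_top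

end BoundedContinuousFunction

def mulL2 : Lp ℂ ∞ (volume : Measure ℝ) →L[ℂ] L2 →L[ℂ] L2 :=
  (ContinuousLinearMap.mul ℂ ℂ).holderL volume ∞ 2 2

theorem coeFn_mulL2 (u : Lp ℂ ∞ (volume : Measure ℝ)) (g : L2) :
    mulL2 u g =ᵐ[volume] fun x => u x * g x :=
  (ContinuousLinearMap.mul ℂ ℂ).coeFn_holder u g

theorem tendsto_mulL2_of_ae_tendsto {u : ℕ → Lp ℂ ∞ (volume : Measure ℝ)}
    {v : Lp ℂ ∞ (volume : Measure ℝ)} {C : ℝ} {g : L2} (hu : ∀ N, ∀ᵐ x, ‖u N x‖ ≤ C)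
    (hlim : ∀ᵐ x, g x ≠ 0 → Tendsto (fun N => u N x) atTop (𝓝 (v x))) :
    Tendsto (fun N => mulL2 (u N) g) atTop (𝓝 (mulL2 v g)) := by
  refine Lp.tendsto_of_dominated_of_ae_tendsto ENNReal.ofNat_ne_top
    ((Lp.memLp g).norm.const_mul C) (fun N => ?_) ?_
  · filter_upwards [hu N, coeFn_mulL2 (u N) g] with x hux hx
    rw [hx, norm_mul]
    exact mul_le_mul_of_nonneg_right hux (norm_nonneg _)
  · filter_upwards [hlim, ae_all_iff.2 fun N => coeFn_mulL2 (u N) g, coeFn_mulL2 v g]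
      with x hx hux hvx
    simp only [hvx, hux]
    by_cases hg : g x = 0
    · simp [hg]
    · exact (hx hg).mul_const _

section Periodic

variable {T : ℝ} [Fact (0 < T)]

def periodicLift : C(AddCircle T, ℂ) →L[ℂ] Lp ℂ ∞ (volume : Measure ℝ) :=
  toLinfty ℂ volume
    ∘L compContinuousCLM ℂ ℂ ⟨((↑) : ℝ → AddCircle T), AddCircle.continuous_mk' T⟩
    ∘L (ContinuousMap.linearIsometryBoundedOfCompact _ ℂ ℂ).toLinearIsometry.toContinuousLinearMap

theorem coeFn_periodicLift (φ : C(AddCircle T, ℂ)) :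
    periodicLift φ =ᵐ[volume] fun x : ℝ => φ x :=
  coeFn_toLinfty (𝕜 := ℂ) volume _

theorem mulL2_periodicLift_mem_of_fourier {V : Submodule ℂ L2} (hV : IsClosed (V : Set L2))
    {g : L2} (hg : ∀ m : ℤ, mulL2 (periodicLift (fourier (T := T) m)) g ∈ V)
    (φ : C(AddCircle T, ℂ)) : mulL2 (periodicLift φ) g ∈ V := by
  let W := V.comap
    ((mulL2.flip g ∘L periodicLift : C(AddCircle T, ℂ) →L[ℂ] L2) : C(AddCircle T, ℂ) →ₗ[ℂ] L2)
  have hW : IsClosed (W : Set C(AddCircle T, ℂ)) := hV.preimage (ContinuousLinearMap.continuous _)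
  have hspan : Submodule.span ℂ (Set.range fourier) ≤ W := by
    rw [Submodule.span_le]
    rintro _ ⟨m, rfl⟩
    exact hg m
  have hWtop : ⊤ ≤ W := span_fourier_closure_eq_top.symm.le.trans
    (Submodule.topologicalClosure_minimal _ hspan hW)
  exact hWtop (Submodule.mem_top (x := φ))

end Periodic

theorem exists_bounded_tendsto_comp_fract {E : Type*} [NormedAddCommGroup E] {h : ℝ → E}
    (hh : Continuous h) :
    ∃ (φ : ℕ → C(AddCircle (1 : ℝ), E)) (C : ℝ), (∀ N y, ‖φ N y‖ ≤ C) ∧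
      ∀ x : ℝ, Tendsto (fun N => φ N x) atTop (𝓝 (h (Int.fract x))) := by
  obtain ⟨C, hC⟩ :=
    isCompact_Icc.exists_bound_of_continuousOn (hh.continuousOn (s := Set.Icc 0 1))
  -- `θ N` is the identity on `[0, N / (N + 1)]` and vanishes at `0` and `1`,
  -- so `h ∘ θ N` descends to the circle.
  let θ (N : ℕ) (t : ℝ) : ℝ := min t (N * (1 - t))
  have hθ (N : ℕ) {t : ℝ} (ht : t ∈ Set.Icc (0 : ℝ) 1) : θ N t ∈ Set.Icc (0 : ℝ) 1 :=
    ⟨le_min ht.1 (mul_nonneg N.cast_nonneg (by linarith [ht.2])), (min_le_left _ _).trans ht.2⟩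
  let φ (N : ℕ) : C(AddCircle (1 : ℝ), E) :=
    ⟨AddCircle.liftIco 1 0 (h ∘ θ N), AddCircle.liftIco_zero_continuous (by simp [θ])
      (hh.comp (by fun_prop)).continuousOn⟩
  have hφ (N : ℕ) (x : ℝ) : φ N x = h (θ N (Int.fract x)) := by
    rw [← AddCircle.coe_fract]
    exact AddCircle.liftIco_zero_coe_apply (f := h ∘ θ N)
      ⟨Int.fract_nonneg x, Int.fract_lt_one x⟩
  refine ⟨φ, C, fun N y => ?_, fun x => ?_⟩
  · induction y using QuotientAddGroup.induction_on with
    | H x => exact hφ N x ▸ hC _ (hθ N ⟨Int.fract_nonneg x, (Int.fract_lt_one x).le⟩)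
  · obtain ⟨N₀, hN₀⟩ := exists_nat_ge (Int.fract x / (1 - Int.fract x))
    have hpos : 0 < 1 - Int.fract x := sub_pos.2 (Int.fract_lt_one x)
    refine tendsto_atTop_of_eventually_const (i₀ := N₀) fun N hN => ?_
    rw [hφ]
    congr 1
    refine min_eq_left ?_
    rw [div_le_iff₀ hpos] at hN₀
    nlinarith [(Nat.cast_le (α := ℝ)).2 hN]

theorem Real.fourier_comp_sub_right {E : Type*} [NormedAddCommGroup E] [NormedSpace ℂ E]
    (f : ℝ → E) (a : ℝ) : 𝓕 (fun x => f (x - a)) = fun w => 𝐞 (-(a * w)) • 𝓕 f w := by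
  simp_rw [sub_eq_add_neg]
  exact (VectorFourier.fourierIntegral_comp_add_right 𝐞 volume (innerₗ ℝ) f (-a)).trans
    (funext fun w => congrArg₂ (· • ·) (by simp [mul_comm]) rfl)

def modulation (a : ℝ) : ℝ →ᵇ ℂ :=
  mkOfBound ⟨fun ω => (𝐞 (-(a * ω)) : ℂ), by fun_prop⟩ 2 fun x y =>
    (dist_le_norm_add_norm _ _).trans_eq (by
      change ‖(𝐞 (-(a * x)) : ℂ)‖ + ‖(𝐞 (-(a * y)) : ℂ)‖ = 2
      rw [Circle.norm_coe, Circle.norm_coe]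
      norm_num)

theorem modulation_apply (a ω : ℝ) : modulation a ω = 𝐞 (-(a * ω)) := rfl

theorem periodicLift_fourier (m : ℤ) :
    periodicLift (fourier (T := 1) m) = toLinfty ℂ volume (modulation (-m)) := by
  change toLinfty ℂ volume _ = _
  congr 1
  ext x
  change fourier m (x : AddCircle (1 : ℝ)) = (𝐞 (-(-m * x)) : ℂ)
  rw [fourier_coe_apply, Real.fourierChar_apply]
  congr 1
  push_cast
  ring

theorem IsFourierTransform.map_tr {F : L2 ≃ₗᵢ[ℂ] L2} (hF : IsFourierTransform F) (a : ℝ)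
    (g : L2) : F (Tr a g) = mulL2 (toLinfty ℂ volume (modulation a)) (F g) := by
  have hcont : Continuous fun g => F (Tr a g) :=
    F.continuous.comp (Lp.isometry_compMeasurePreserving _).continuous
  have hcont' : Continuous fun g => mulL2 (toLinfty ℂ volume (modulation a)) (F g) :=
    (mulL2 _).continuous.comp F.continuous
  refine congrFun (Continuous.ext_on (Lp.simpleFunc.dense (p := 2) (by norm_num)) hcont hcont'
    fun g hg => ?_) g
  have hg : Integrable (g : ℝ → ℂ) :=
    Lp.simpleFunc.integrable (by norm_num) (by norm_num) ⟨g, hg⟩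
  have hTr : Tr a g =ᵐ[volume] fun x => g (x - a) := Lp.coeFn_compMeasurePreserving _ _
  apply Lp.ext
  filter_upwards [hF _ ((hg.comp_sub_right a).congr hTr.symm), hF g hg, coeFn_mulL2 _ (F g),
    coeFn_toLinfty (𝕜 := ℂ) volume (modulation a)] with ω hTrω hgω hmulω hmodω
  rw [hTrω, hmulω, hmodω, hgω, Real.fourier_congr_ae hTr, Real.fourier_comp_sub_right]
  rfl

theorem exists_eq_add_fract_add_of_mem_Bset {n k : ℕ} {ω : ℝ} (hω : ω ∈ Bset n k) :
    ∃ t : ℤ, ω = k + Int.fract ω + n * t := by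
  obtain ⟨t, ht⟩ := hω
  have hfract : Int.fract ω = ω - n * t - k :=
    Int.fract_eq_iff.2 ⟨by linarith [ht.1], by linarith [ht.2], n * t + k, by push_cast; ring⟩
  exact ⟨t, by rw [hfract]; ring⟩

theorem fourierChar_neg_div_mul_of_mem_Bset {n k : ℕ} (hn : n ≠ 0) (j : ℤ) {ω : ℝ}
    (hω : ω ∈ Bset n k) : 𝐞 (-(j / n * ω)) = 𝐞 (-(j / n * (k + Int.fract ω))) := by
  obtain ⟨t, ht⟩ := exists_eq_add_fract_add_of_mem_Bset hω
  have h : -(j / n * ω) = -(j / n * (k + Int.fract ω)) + ((-(j * t) : ℤ) : ℝ) := by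
    conv_lhs => rw [ht]
    field_simp
    push_cast
    ring
  rw [h, AddChar.map_add_eq_mul, Real.fourierChar_apply' ((-(j * t) : ℤ) : ℝ),
    Circle.exp_two_pi_mul_int, mul_one]

theorem mulL2_modulation_mem_of_ae_eq_zero {V : Submodule ℂ L2} (hV : IsClosed (V : Set L2))
    {g : L2} (hg : ∀ m : ℤ, mulL2 (periodicLift (fourier (T := 1) m)) g ∈ V) {n k : ℕ}
    (hn : n ≠ 0) (j : ℤ) (hsupp : ∀ᵐ ω, ω ∉ Bset n k → g ω = 0) :
    mulL2 (toLinfty ℂ volume (modulation (j / n))) g ∈ V := by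
  obtain ⟨φ, C, hφC, hφ⟩ :=
    exists_bounded_tendsto_comp_fract (h := fun t => (𝐞 (-(j / n * (k + t))) : ℂ)) (by fun_prop)
  refine hV.mem_of_tendsto (tendsto_mulL2_of_ae_tendsto (C := C) (fun N => ?_) ?_)
    (.of_forall fun N => mulL2_periodicLift_mem_of_fourier hV hg (φ N))
  · filter_upwards [coeFn_periodicLift (φ N)] with x hx
    exact hx ▸ hφC N x
  · filter_upwards [ae_all_iff.2 fun N => coeFn_periodicLift (φ N),
      coeFn_toLinfty (𝕜 := ℂ) volume (modulation (j / n)), hsupp] with x hφx hmod hsuppx hgx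
    simp only [hφx, hmod, modulation_apply]
    rw [fourierChar_neg_div_mul_of_mem_Bset hn j (not_not.1 (mt hsuppx hgx))]
    exact hφ x

theorem stmt11_general (F : L2 ≃ₗᵢ[ℂ] L2) (hF : IsFourierTransform F)
    (n : ℕ) (hn : 0 < n)
    (S : Submodule ℂ L2) (hS : IsClosed (S : Set L2))
    (hinv : ∀ f ∈ S, ∀ j : ℤ, Tr (j : ℝ) f ∈ S)
    (k : ℕ)
    (hsupp : ∀ f ∈ S, ∀ᵐ ω ∂(volume : Measure ℝ), ω ∉ Bset n k → (F f : ℝ → ℂ) ω = 0) :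
    ∀ f ∈ S, ∀ j : ℤ, Tr ((j : ℝ) / n) f ∈ S := by
  intro f hf j
  let V : Submodule ℂ L2 := S.comap (F.symm.toLinearEquiv : L2 →ₗ[ℂ] L2)
  have hV : IsClosed (V : Set L2) := hS.preimage F.symm.continuous
  have hFV {g : L2} : F g ∈ V ↔ g ∈ S := by simp [V]
  have hfourier (m : ℤ) : mulL2 (periodicLift (fourier (T := 1) m)) (F f) ∈ V := by
    rw [periodicLift_fourier, ← hF.map_tr, hFV]
    exact_mod_cast hinv f hf (-m)
  rw [← hFV, hF.map_tr]
  exact mulL2_modulation_mem_of_ae_eq_zero hV hfourier hn.ne' j (hsupp f hf)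

/-- If every `f ∈ S` has `supp f̂ ⊆ B_k` for one fixed `k`, then the SIS `S` is
`(1/n)ℤ`-invariant. -/
theorem stmt11 (F : L2 ≃ₗᵢ[ℂ] L2) (hF : IsFourierTransform F)
    (n : ℕ) (hn : 0 < n)
    (S : Submodule ℂ L2) (hS : IsClosed (S : Set L2))
    (hinv : ∀ f ∈ S, ∀ j : ℤ, Tr (j : ℝ) f ∈ S)
    (k : ℕ) (hk : k < n)
    (hsupp : ∀ f ∈ S, ∀ᵐ ω ∂(volume : Measure ℝ), ω ∉ Bset n k → (F f : ℝ → ℂ) ω = 0) :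
    ∀ f ∈ S, ∀ j : ℤ, Tr ((j : ℝ) / n) f ∈ S :=
  stmt11_general F hF n hn S hS hinv k hsupp

end
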